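/- For a Boltzmann machine with visible and hidden units, the Hessian of f(θ) = E_target[log P_θ(X)] equals E_target[Cov_θ[S | X]] - Cov_θ[S], where S is the vector of all unit values and pairwise products of unit values, Cov_θ[S | X] is the conditional covariance matrix of S given the visible values X, and Cov_θ[S] is the unconditional covariance matrix under P_θ. -/

import Mathlib

/-!
Let `A(θ) = log ∑_c exp(-E_θ(c))` be the log-partition function and `A_x` the one restricted to
configurations with visible part `x`, so that `log P_θ(x) = A_x(θ) - A(θ)`. Since `-E_θ(c)` is
linear in `θ` with coordinates `S(c)`, each such log-partition function has the Gibbs mean of `S`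
as gradient and the Gibbs covariance of `S` as Hessian; averaging over `P_target`, whose total
mass is `1`, gives the expected conditional covariance minus the unconditional one.
-/

open Real

noncomputable section

section Gibbs

variable {E : Type*} [NormedAddCommGroup E] [NormedSpace ℝ E]
variable {ι : Type*} [Fintype ι]

def logPartition (L : ι → E →L[ℝ] ℝ) (θ : E) : ℝ := log (∑ i, exp (L i θ))

-- `exp (L θ - A θ)` rather than `exp (L θ) / Z θ`, so that it differentiates by the chain rule.
def gibbs (L : ι → E →L[ℝ] ℝ) (θ : E) (i : ι) : ℝ := exp (L i θ - logPartition L θ)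

def gibbsMean (L : ι → E →L[ℝ] ℝ) (θ : E) (s : ι → ℝ) : ℝ := ∑ i, gibbs L θ i * s i

def gibbsCov (L : ι → E →L[ℝ] ℝ) (θ : E) (s t : ι → ℝ) : ℝ :=
  gibbsMean L θ (s * t) - gibbsMean L θ s * gibbsMean L θ t

variable (L : ι → E →L[ℝ] ℝ)

theorem gibbsMean_deriv_apply (θ w : E) (s : ι → ℝ) :
    (∑ i, s i • gibbs L θ i • (L i - ∑ j, gibbs L θ j • L j)) w
      = gibbsCov L θ s (fun i => L i w) := by
  simp only [gibbsCov, gibbsMean, sum_apply, smul_apply, sub_apply, smul_eq_mul,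
    Pi.mul_apply, mul_sub, Finset.sum_sub_distrib]
  rw [Finset.sum_mul]
  congr 1 <;> exact Finset.sum_congr rfl fun i _ => by ring

variable [Nonempty ι]

theorem sum_exp_pos (θ : E) : 0 < ∑ i, exp (L i θ) :=
  Finset.sum_pos (fun _ _ => exp_pos _) Finset.univ_nonempty

theorem gibbs_eq_div (θ : E) (i : ι) : gibbs L θ i = exp (L i θ) / ∑ j, exp (L j θ) := by
  rw [gibbs, exp_sub, logPartition, exp_log (sum_exp_pos L θ)]

theorem hasFDerivAt_logPartition (θ : E) :
    HasFDerivAt (logPartition L) (∑ i, gibbs L θ i • L i) θ := by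
  refine ((HasFDerivAt.fun_sum fun i _ => (L i).hasFDerivAt.exp).log
    (sum_exp_pos L θ).ne').congr_fderiv ?_
  simp only [Finset.smul_sum, smul_smul, gibbs_eq_div, div_eq_inv_mul]

theorem hasFDerivAt_gibbs (θ : E) (i : ι) :
    HasFDerivAt (fun θ' => gibbs L θ' i) (gibbs L θ i • (L i - ∑ j, gibbs L θ j • L j)) θ :=
  ((L i).hasFDerivAt.sub (hasFDerivAt_logPartition L θ)).exp

theorem hasFDerivAt_gibbsMean (θ : E) (s : ι → ℝ) :
    HasFDerivAt (fun θ' => gibbsMean L θ' s)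
      (∑ i, s i • gibbs L θ i • (L i - ∑ j, gibbs L θ j • L j)) θ :=
  HasFDerivAt.fun_sum fun i _ => (hasFDerivAt_gibbs L θ i).mul_const (s i)

end Gibbs

section Latent

variable {E : Type*} [NormedAddCommGroup E] [NormedSpace ℝ E]
variable {X H : Type*} [Fintype X] [Fintype H]

def expectedLogMarginal (p : X → ℝ) (L : X × H → E →L[ℝ] ℝ) (θ : E) : ℝ :=
  ∑ x, p x * log (∑ h, gibbs L θ (x, h))

variable [Nonempty X] [Nonempty H] (L : X × H → E →L[ℝ] ℝ)

theorem sum_gibbs_fiber (θ : E) (x : X) :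
    ∑ h, gibbs L θ (x, h) = exp (logPartition (fun h => L (x, h)) θ - logPartition L θ) := by
  simp only [gibbs, exp_sub, ← Finset.sum_div, logPartition, exp_log (sum_exp_pos L θ),
    exp_log (sum_exp_pos (fun h => L (x, h)) θ)]

theorem gibbs_div_sum_gibbs_fiber (θ : E) (x : X) (h : H) :
    gibbs L θ (x, h) / ∑ h', gibbs L θ (x, h') = gibbs (fun h => L (x, h)) θ h := by
  rw [sum_gibbs_fiber, gibbs, gibbs, ← exp_sub]
  ring_nf

theorem fderiv_expectedLogMarginal_apply (p : X → ℝ) (θ u : E) :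
    fderiv ℝ (expectedLogMarginal p L) θ u
      = ∑ x, p x * (gibbsMean (fun h => L (x, h)) θ (fun h => L (x, h) u)
          - gibbsMean L θ (fun c => L c u)) := by
  have hF : expectedLogMarginal p L
      = fun θ' => ∑ x, p x * (logPartition (fun h => L (x, h)) θ' - logPartition L θ') := by
    ext θ'
    simp only [expectedLogMarginal, sum_gibbs_fiber, log_exp]
  rw [hF, (HasFDerivAt.fun_sum fun x _ => ((hasFDerivAt_logPartition _ θ).fun_sub
    (hasFDerivAt_logPartition L θ)).const_mul (p x)).fderiv]
  simp [gibbsMean]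

theorem fderiv_fderiv_expectedLogMarginal_apply (p : X → ℝ) (hp : ∑ x, p x = 1) (θ u w : E) :
    fderiv ℝ (fun θ' => fderiv ℝ (expectedLogMarginal p L) θ' u) θ w
      = ∑ x, p x * gibbsCov (fun h => L (x, h)) θ (fun h => L (x, h) u) (fun h => L (x, h) w)
        - gibbsCov L θ (fun c => L c u) (fun c => L c w) := by
  simp_rw [fderiv_expectedLogMarginal_apply]
  rw [(HasFDerivAt.fun_sum fun x _ => ((hasFDerivAt_gibbsMean _ θ _).fun_sub
    (hasFDerivAt_gibbsMean L θ _)).const_mul (p x)).fderiv, sum_apply]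
  simp only [smul_apply, sub_apply, smul_eq_mul, gibbsMean_deriv_apply, mul_sub,
    Finset.sum_sub_distrib, ← Finset.sum_mul, hp, one_mul]

end Latent

section Energy

variable {ι : Type*} [Fintype ι]

def negEnergy (v : ι → ℝ) : ((ι → ℝ) × (ι → ι → ℝ)) →L[ℝ] ℝ :=
  (∑ u, v u • ContinuousLinearMap.proj u).comp (ContinuousLinearMap.fst ℝ _ _)
    + (∑ u, ∑ w, (v u * v w) • (ContinuousLinearMap.proj w).comp (ContinuousLinearMap.proj u)).comp
      (ContinuousLinearMap.snd ℝ _ _)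

theorem negEnergy_apply (v : ι → ℝ) (θ : (ι → ℝ) × (ι → ι → ℝ)) :
    negEnergy v θ = ∑ u, θ.1 u * v u + ∑ u, ∑ w, θ.2 u w * v u * v w := by
  simp only [negEnergy, add_apply, ContinuousLinearMap.comp_apply, sum_apply, smul_apply,
    ContinuousLinearMap.proj_apply, ContinuousLinearMap.coe_fst', ContinuousLinearMap.coe_snd',
    smul_eq_mul]
  congr 1
  · exact Finset.sum_congr rfl fun u _ => mul_comm _ _
  · exact Finset.sum_congr rfl fun u _ => Finset.sum_congr rfl fun w _ => by ring

variable [DecidableEq ι]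

theorem negEnergy_single_fst (v : ι → ℝ) (u : ι) : negEnergy v (Pi.single u 1, 0) = v u := by
  simp [negEnergy_apply, Pi.single_apply]

theorem negEnergy_indicator_snd (v : ι → ℝ) (p : ι × ι) :
    negEnergy v (0, fun u w => if u = p.1 ∧ w = p.2 then 1 else 0) = v p.1 * v p.2 := by
  simp [negEnergy_apply, ite_and, Finset.sum_ite_eq']

end Energy

end

theorem boltzmann_hidden_hessian_general (N M : ℕ)
    -- real value of each (visible or hidden) unit in a configuration
    (val : (Fin N → Bool) × (Fin M → Bool) → (Fin N ⊕ Fin M) → ℝ)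
    (E : ((Fin N ⊕ Fin M → ℝ) × (Fin N ⊕ Fin M → Fin N ⊕ Fin M → ℝ))
          → (Fin N → Bool) × (Fin M → Bool) → ℝ)
    (hE : ∀ θ c, E θ c
      = -(∑ u, θ.1 u * val c u) - ∑ u, ∑ v, θ.2 u v * val c u * val c v)
    (Pjoint : ((Fin N ⊕ Fin M → ℝ) × (Fin N ⊕ Fin M → Fin N ⊕ Fin M → ℝ))
          → (Fin N → Bool) × (Fin M → Bool) → ℝ)
    (hPjoint : ∀ θ c, Pjoint θ c
      = Real.exp (-(E θ c))
        / ∑ c' : (Fin N → Bool) × (Fin M → Bool), Real.exp (-(E θ c')))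
    (Pmarg : ((Fin N ⊕ Fin M → ℝ) × (Fin N ⊕ Fin M → Fin N ⊕ Fin M → ℝ))
          → (Fin N → Bool) → ℝ)
    (hPmarg : ∀ θ x, Pmarg θ x = ∑ h : Fin M → Bool, Pjoint θ (x, h))
    (Pcond : ((Fin N ⊕ Fin M → ℝ) × (Fin N ⊕ Fin M → Fin N ⊕ Fin M → ℝ))
          → (Fin N → Bool) → (Fin M → Bool) → ℝ)
    (hPcond : ∀ θ x h, Pcond θ x h = Pjoint θ (x, h) / Pmarg θ x)
    (Ptarget : (Fin N → Bool) → ℝ)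
    (hsum : ∑ x : Fin N → Bool, Ptarget x = 1)
    (f : ((Fin N ⊕ Fin M → ℝ) × (Fin N ⊕ Fin M → Fin N ⊕ Fin M → ℝ)) → ℝ)
    (hf : ∀ θ, f θ = ∑ x : Fin N → Bool, Ptarget x * Real.log (Pmarg θ x))
    -- components of S: unit values and pairwise products
    (S : (Fin N → Bool) × (Fin M → Bool)
          → ((Fin N ⊕ Fin M) ⊕ ((Fin N ⊕ Fin M) × (Fin N ⊕ Fin M))) → ℝ)
    (hS : ∀ c, (∀ u, S c (Sum.inl u) = val c u)
      ∧ ∀ p : (Fin N ⊕ Fin M) × (Fin N ⊕ Fin M),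
          S c (Sum.inr p) = val c p.1 * val c p.2)
    -- parameter coordinate directions corresponding to each component of S
    (d : ((Fin N ⊕ Fin M) ⊕ ((Fin N ⊕ Fin M) × (Fin N ⊕ Fin M)))
          → (Fin N ⊕ Fin M → ℝ) × (Fin N ⊕ Fin M → Fin N ⊕ Fin M → ℝ))
    (hd : (∀ u, d (Sum.inl u) = (Pi.single u 1, 0))
      ∧ ∀ p : (Fin N ⊕ Fin M) × (Fin N ⊕ Fin M),
          d (Sum.inr p) = (0, fun u v => if u = p.1 ∧ v = p.2 then 1 else 0))
    (θ : (Fin N ⊕ Fin M → ℝ) × (Fin N ⊕ Fin M → Fin N ⊕ Fin M → ℝ))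
    (a b : (Fin N ⊕ Fin M) ⊕ ((Fin N ⊕ Fin M) × (Fin N ⊕ Fin M))) :
    fderiv ℝ (fun θ' => fderiv ℝ f θ' (d a)) θ (d b)
      = (∑ x : Fin N → Bool, Ptarget x *
          ((∑ h : Fin M → Bool, Pcond θ x h * (S (x, h) a * S (x, h) b))
            - (∑ h : Fin M → Bool, Pcond θ x h * S (x, h) a)
              * (∑ h : Fin M → Bool, Pcond θ x h * S (x, h) b)))
        - ((∑ c : (Fin N → Bool) × (Fin M → Bool), Pjoint θ c * (S c a * S c b))
            - (∑ c : (Fin N → Bool) × (Fin M → Bool), Pjoint θ c * S c a)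
              * (∑ c : (Fin N → Bool) × (Fin M → Bool), Pjoint θ c * S c b)) := by
  set L : (Fin N → Bool) × (Fin M → Bool) → _ →L[ℝ] ℝ := fun c => negEnergy (val c)
  have hEL : ∀ θ c, -E θ c = L c θ := by
    intro θ c
    rw [hE, negEnergy_apply]
    ring
  have hLS : ∀ c e, L c (d e) = S c e := by
    rintro c (u | p)
    · rw [hd.1 u, (hS c).1 u, negEnergy_single_fst]
    · rw [hd.2 p, (hS c).2 p, negEnergy_indicator_snd]
  have hPjoint_gibbs : ∀ θ c, Pjoint θ c = gibbs L θ c := by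
    intro θ c
    simp only [hPjoint, hEL, gibbs_eq_div]
  have hPcond_gibbs : ∀ x h, Pcond θ x h = gibbs (fun h => L (x, h)) θ h := by
    intro x h
    simp only [hPcond, hPmarg, hPjoint_gibbs, gibbs_div_sum_gibbs_fiber]
  have hf_eq : f = expectedLogMarginal Ptarget L := by
    funext θ
    simp only [hf, hPmarg, hPjoint_gibbs, expectedLogMarginal]
  rw [hf_eq, fderiv_fderiv_expectedLogMarginal_apply L Ptarget hsum]
  simp only [gibbsCov, gibbsMean, hPcond_gibbs, hPjoint_gibbs, hLS, Pi.mul_apply]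

/-- for a Boltzmann machine with `N` visible and `M` hidden units,
the Hessian of `f(θ) = E_target[log P_θ(X)]` equals
`E_target[Cov_θ[S | X]] - Cov_θ[S]`, where `S` is the vector of all unit values
and pairwise products of unit values.  Entries of the Hessian are formalized as
second directional derivatives along the parameter coordinate directions. -/
theorem boltzmann_hidden_hessian (N M : ℕ)
    -- real value of each (visible or hidden) unit in a configuration
    (val : (Fin N → Bool) × (Fin M → Bool) → (Fin N ⊕ Fin M) → ℝ)
    (hval : ∀ c, (∀ i, val c (Sum.inl i) = if c.1 i then 1 else 0)
      ∧ ∀ j, val c (Sum.inr j) = if c.2 j then 1 else 0)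
    (E : ((Fin N ⊕ Fin M → ℝ) × (Fin N ⊕ Fin M → Fin N ⊕ Fin M → ℝ))
          → (Fin N → Bool) × (Fin M → Bool) → ℝ)
    (hE : ∀ θ c, E θ c
      = -(∑ u, θ.1 u * val c u) - ∑ u, ∑ v, θ.2 u v * val c u * val c v)
    (Pjoint : ((Fin N ⊕ Fin M → ℝ) × (Fin N ⊕ Fin M → Fin N ⊕ Fin M → ℝ))
          → (Fin N → Bool) × (Fin M → Bool) → ℝ)
    (hPjoint : ∀ θ c, Pjoint θ c
      = Real.exp (-(E θ c))
        / ∑ c' : (Fin N → Bool) × (Fin M → Bool), Real.exp (-(E θ c')))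
    (Pmarg : ((Fin N ⊕ Fin M → ℝ) × (Fin N ⊕ Fin M → Fin N ⊕ Fin M → ℝ))
          → (Fin N → Bool) → ℝ)
    (hPmarg : ∀ θ x, Pmarg θ x = ∑ h : Fin M → Bool, Pjoint θ (x, h))
    (Pcond : ((Fin N ⊕ Fin M → ℝ) × (Fin N ⊕ Fin M → Fin N ⊕ Fin M → ℝ))
          → (Fin N → Bool) → (Fin M → Bool) → ℝ)
    (hPcond : ∀ θ x h, Pcond θ x h = Pjoint θ (x, h) / Pmarg θ x)
    (Ptarget : (Fin N → Bool) → ℝ)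
    (hnn : ∀ x, 0 ≤ Ptarget x)
    (hsum : ∑ x : Fin N → Bool, Ptarget x = 1)
    (f : ((Fin N ⊕ Fin M → ℝ) × (Fin N ⊕ Fin M → Fin N ⊕ Fin M → ℝ)) → ℝ)
    (hf : ∀ θ, f θ = ∑ x : Fin N → Bool, Ptarget x * Real.log (Pmarg θ x))
    -- components of S: unit values and pairwise products
    (S : (Fin N → Bool) × (Fin M → Bool)
          → ((Fin N ⊕ Fin M) ⊕ ((Fin N ⊕ Fin M) × (Fin N ⊕ Fin M))) → ℝ)
    (hS : ∀ c, (∀ u, S c (Sum.inl u) = val c u)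
      ∧ ∀ p : (Fin N ⊕ Fin M) × (Fin N ⊕ Fin M),
          S c (Sum.inr p) = val c p.1 * val c p.2)
    -- parameter coordinate directions corresponding to each component of S
    (d : ((Fin N ⊕ Fin M) ⊕ ((Fin N ⊕ Fin M) × (Fin N ⊕ Fin M)))
          → (Fin N ⊕ Fin M → ℝ) × (Fin N ⊕ Fin M → Fin N ⊕ Fin M → ℝ))
    (hd : (∀ u, d (Sum.inl u) = (Pi.single u 1, 0))
      ∧ ∀ p : (Fin N ⊕ Fin M) × (Fin N ⊕ Fin M),
          d (Sum.inr p) = (0, fun u v => if u = p.1 ∧ v = p.2 then 1 else 0))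
    (θ : (Fin N ⊕ Fin M → ℝ) × (Fin N ⊕ Fin M → Fin N ⊕ Fin M → ℝ))
    (a b : (Fin N ⊕ Fin M) ⊕ ((Fin N ⊕ Fin M) × (Fin N ⊕ Fin M))) :
    fderiv ℝ (fun θ' => fderiv ℝ f θ' (d a)) θ (d b)
      = (∑ x : Fin N → Bool, Ptarget x *
          ((∑ h : Fin M → Bool, Pcond θ x h * (S (x, h) a * S (x, h) b))
            - (∑ h : Fin M → Bool, Pcond θ x h * S (x, h) a)
              * (∑ h : Fin M → Bool, Pcond θ x h * S (x, h) b)))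
        - ((∑ c : (Fin N → Bool) × (Fin M → Bool), Pjoint θ c * (S c a * S c b))
            - (∑ c : (Fin N → Bool) × (Fin M → Bool), Pjoint θ c * S c a)
              * (∑ c : (Fin N → Bool) × (Fin M → Bool), Pjoint θ c * S c b)) :=
  boltzmann_hidden_hessian_general N M val E hE Pjoint hPjoint Pmarg hPmarg Pcond hPcond Ptarget
    hsum f hf S hS d hd θ a b
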